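/- arXiv:2108.13347 — 2 statements merged into one kernel-verified Lean document; each statement's English description precedes it below -/
import Mathlib

section
/- Let D ⊆ ℝ² be a bounded open set, let X be a C¹ map with values in ℝⁿ defined on an open set containing the closure of D, and let G : ℝ² → ℝⁿ be a C¹ map whose support is a compact subset of D. Then the function t ↦ 𝒟(X + tG) = ½∫_D (|X_u + tG_u|² + |X_v + tG_v|²) du dv is differentiable at t = 0 with derivative equal to ∫_D (X_u·G_u + X_v·G_v) du dv. -/
open MeasureTheory

/-- Partial derivative in the `u` (first) direction. -/
noncomputable def pderivU {E : Type*} [NormedAddCommGroup E] [NormedSpace ℝ E]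
    (X : ℝ × ℝ → E) (p : ℝ × ℝ) : E := fderiv ℝ X p (1, 0)

/-- Partial derivative in the `v` (second) direction. -/
noncomputable def pderivV {E : Type*} [NormedAddCommGroup E] [NormedSpace ℝ E]
    (X : ℝ × ℝ → E) (p : ℝ × ℝ) : E := fderiv ℝ X p (0, 1)

/-- For a bounded open set `D ⊆ ℝ²`, a `C¹` map `X` defined on an open
neighbourhood of `closure D` with values in `ℝⁿ`, and a `C¹` map `G : ℝ² → ℝⁿ` with compact
support contained in `D`, the function `t ↦ 𝒟(X + tG)` is differentiable at `t = 0`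
with derivative `∫_D (X_u·G_u + X_v·G_v)`. -/
theorem firstVariation_energy (n : ℕ) (D U : Set (ℝ × ℝ)) (hD : IsOpen D)
    (hDb : Bornology.IsBounded D) (hU : IsOpen U) (hDU : closure D ⊆ U)
    (X G : ℝ × ℝ → EuclideanSpace ℝ (Fin n))
    (hX : ContDiffOn ℝ 1 X U)
    (hG : ContDiff ℝ 1 G) (hGc : HasCompactSupport G) (hGs : tsupport G ⊆ D) :
    HasDerivAt
      (fun t : ℝ => (1 / 2) * ∫ p in D,
        (‖pderivU X p + t • pderivU G p‖ ^ 2 + ‖pderivV X p + t • pderivV G p‖ ^ 2))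
      (∫ p in D, ((inner ℝ (pderivU X p) (pderivU G p) : ℝ) +
        (inner ℝ (pderivV X p) (pderivV G p) : ℝ))) 0 := by
  have hDc : IsCompact (closure D) :=
    Metric.isCompact_of_isClosed_isBounded isClosed_closure hDb.closure
  have hfd : ContinuousOn (fderiv ℝ X) U := hX.continuousOn_fderiv_of_isOpen hU le_rfl
  have hXu : ContinuousOn (pderivU X) (closure D) :=
    ((hfd.clm_apply continuousOn_const).mono hDU)
  have hXv : ContinuousOn (pderivV X) (closure D) :=
    ((hfd.clm_apply continuousOn_const).mono hDU)
  have hgd : Continuous (fderiv ℝ G) := hG.continuous_fderiv one_ne_zero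
  have hGu : ContinuousOn (pderivU G) (closure D) :=
    (hgd.clm_apply continuous_const).continuousOn
  have hGv : ContinuousOn (pderivV G) (closure D) :=
    (hgd.clm_apply continuous_const).continuousOn
  set A : ℝ × ℝ → ℝ := fun p => ‖pderivU X p‖ ^ 2 + ‖pderivV X p‖ ^ 2 with hA
  set B : ℝ × ℝ → ℝ := fun p =>
    (inner ℝ (pderivU X p) (pderivU G p) : ℝ) + (inner ℝ (pderivV X p) (pderivV G p) : ℝ) with hB
  set C : ℝ × ℝ → ℝ := fun p => ‖pderivU G p‖ ^ 2 + ‖pderivV G p‖ ^ 2 with hC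
  have hAint : IntegrableOn A D := by
    refine (ContinuousOn.integrableOn_compact hDc ?_).mono_set subset_closure
    exact ((hXu.norm.pow 2).add (hXv.norm.pow 2))
  have hBint : IntegrableOn B D := by
    refine (ContinuousOn.integrableOn_compact hDc ?_).mono_set subset_closure
    exact ((hXu.inner hGu).add (hXv.inner hGv))
  have hCint : IntegrableOn C D := by
    refine (ContinuousOn.integrableOn_compact hDc ?_).mono_set subset_closure
    exact ((hGu.norm.pow 2).add (hGv.norm.pow 2))
  set c0 : ℝ := (1 / 2) * ∫ p in D, A p with hc0
  set b : ℝ := ∫ p in D, B p with hb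
  set c : ℝ := (1 / 2) * ∫ p in D, C p with hc
  have key : ∀ t : ℝ,
      (1 / 2 : ℝ) * ∫ p in D,
        (‖pderivU X p + t • pderivU G p‖ ^ 2 + ‖pderivV X p + t • pderivV G p‖ ^ 2)
      = c0 + t * b + t ^ 2 * c := by
    intro t
    have hpt : ∀ p ∈ D,
        (‖pderivU X p + t • pderivU G p‖ ^ 2 + ‖pderivV X p + t • pderivV G p‖ ^ 2)
        = A p + (2 * t) * B p + t ^ 2 * C p := by
      intro p _
      simp only [hA, hB, hC, @norm_add_sq_real, real_inner_smul_right, norm_smul,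
        Real.norm_eq_abs, mul_pow, sq_abs]
      ring
    have e1 : ∫ p in D, (A p + (2 * t) * B p + t ^ 2 * C p)
        = (∫ p in D, (A p + (2 * t) * B p)) + ∫ p in D, t ^ 2 * C p :=
      MeasureTheory.integral_add (hAint.add (hBint.const_mul _)) (hCint.const_mul _)
    have e2 : ∫ p in D, (A p + (2 * t) * B p)
        = (∫ p in D, A p) + ∫ p in D, (2 * t) * B p :=
      MeasureTheory.integral_add hAint (hBint.const_mul _)
    rw [MeasureTheory.setIntegral_congr_fun hD.measurableSet hpt, e1, e2,
      integral_const_mul, integral_const_mul,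
      hc0, hb, hc]
    ring
  have hfun : (fun t : ℝ => (1 / 2) * ∫ p in D,
        (‖pderivU X p + t • pderivU G p‖ ^ 2 + ‖pderivV X p + t • pderivV G p‖ ^ 2))
      = fun t : ℝ => c0 + t * b + t ^ 2 * c := funext key
  rw [hfun]
  have h1 : HasDerivAt (fun t : ℝ => c0 + t * b) b 0 := by
    simpa using ((hasDerivAt_id (0 : ℝ)).mul_const b).const_add c0
  have h2 : HasDerivAt (fun t : ℝ => t ^ 2 * c) 0 0 := by
    simpa using (hasDerivAt_pow 2 (0 : ℝ)).mul_const c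
  simpa [Pi.add_def] using h1.add h2
end

section
/- Let D ⊆ ℝ² be a bounded open set, let X be a smooth conformal immersion with values in ℝⁿ (n ≥ 3) defined on an open set containing the closure of D, and let G : ℝ² → ℝⁿ be a smooth map whose support is a compact subset of D. Then the function t ↦ Area(X + tG) = ∫_D √(|X_u + tG_u|²|X_v + tG_v|² − ((X_u + tG_u)·(X_v + tG_v))²) du dv is differentiable at t = 0 with derivative equal to ∫_D (X_u·G_u + X_v·G_v) du dv; in particular, the first variation of area at a conformal immersion equals the first variation of the Dirichlet energy. -/
open MeasureTheory RealInnerProductSpace Set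

lemma aux_hasDerivAt {E : Type*} [NormedAddCommGroup E] [InnerProductSpace ℝ E]
    (a b a' b' : E) (t : ℝ)
    (hpos : 0 < ‖a + t • a'‖ ^ 2 * ‖b + t • b'‖ ^ 2 - ⟪a + t • a', b + t • b'⟫ ^ 2) :
    HasDerivAt (fun s : ℝ => Real.sqrt (‖a + s • a'‖ ^ 2 * ‖b + s • b'‖ ^ 2 -
        ⟪a + s • a', b + s • b'⟫ ^ 2))
      ((⟪a', a + t • a'⟫ * ‖b + t • b'‖ ^ 2 + ‖a + t • a'‖ ^ 2 * ⟪b', b + t • b'⟫ -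
        ⟪a + t • a', b + t • b'⟫ * (⟪a', b + t • b'⟫ + ⟪a + t • a', b'⟫)) /
        Real.sqrt (‖a + t • a'‖ ^ 2 * ‖b + t • b'‖ ^ 2 - ⟪a + t • a', b + t • b'⟫ ^ 2)) t := by
  have hA : HasDerivAt (fun s : ℝ => a + s • a') a' t := by
    simpa using ((hasDerivAt_id t).smul_const a').const_add a
  have hB : HasDerivAt (fun s : ℝ => b + s • b') b' t := by
    simpa using ((hasDerivAt_id t).smul_const b').const_add b
  have hAA := hA.inner ℝ hA
  have hBB := hB.inner ℝ hB
  have hAB := hA.inner ℝ hB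
  have hne : (‖a + t • a'‖ ^ 2 * ‖b + t • b'‖ ^ 2 - ⟪a + t • a', b + t • b'⟫ ^ 2) ≠ 0 :=
    ne_of_gt hpos
  have hne' : ⟪a + t • a', a + t • a'⟫ * ⟪b + t • b', b + t • b'⟫
      - ⟪a + t • a', b + t • b'⟫ ^ 2 ≠ 0 := by
    rw [real_inner_self_eq_norm_sq, real_inner_self_eq_norm_sq]; exact hne
  have key := (((hAA.mul hBB).sub (hAB.pow 2)).sqrt hne')
  convert key using 1
  · funext s; simp only [Pi.sub_apply, Pi.mul_apply, Pi.pow_apply]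
    rw [real_inner_self_eq_norm_sq, real_inner_self_eq_norm_sq]
  · have hs : Real.sqrt (‖a + t • a'‖ ^ 2 * ‖b + t • b'‖ ^ 2 - ⟪a + t • a', b + t • b'⟫ ^ 2) ≠ 0 :=
      (Real.sqrt_pos.mpr hpos).ne'
    simp only [Pi.sub_apply, Pi.mul_apply, Pi.pow_apply]
    rw [real_inner_self_eq_norm_sq, real_inner_self_eq_norm_sq]
    rw [real_inner_comm (a + t • a') a', real_inner_comm (b + t • b') b']
    field_simp
    ring


/-- First variation of area at a smooth conformal immersion: for a bounded
open set `D ⊆ ℝ²`, a smooth conformal immersion `X` into `ℝⁿ` (`n ≥ 3`) defined on an open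
neighbourhood of `closure D`, and a smooth `G : ℝ² → ℝⁿ` with compact support in `D`,
the function `t ↦ Area(X + tG)` is differentiable at `t = 0` with derivative
`∫_D (X_u·G_u + X_v·G_v)`, i.e., the first variation of the Dirichlet energy. -/
theorem firstVariation_area (n : ℕ) (hn : 3 ≤ n) (D U : Set (ℝ × ℝ)) (hD : IsOpen D)
    (hDb : Bornology.IsBounded D) (hU : IsOpen U) (hDU : closure D ⊆ U)
    (X G : ℝ × ℝ → EuclideanSpace ℝ (Fin n))
    (hX : ContDiffOn ℝ (⊤ : ℕ∞) X U)
    (hconf : ∀ p ∈ U, ‖pderivU X p‖ = ‖pderivV X p‖ ∧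
      (inner ℝ (pderivU X p) (pderivV X p) : ℝ) = 0)
    (himm : ∀ p ∈ U, pderivU X p ≠ 0)
    (hG : ContDiff ℝ (⊤ : ℕ∞) G) (hGc : HasCompactSupport G) (hGs : tsupport G ⊆ D) :
    HasDerivAt
      (fun t : ℝ => ∫ p in D,
        Real.sqrt (‖pderivU X p + t • pderivU G p‖ ^ 2 * ‖pderivV X p + t • pderivV G p‖ ^ 2 -
          (inner ℝ (pderivU X p + t • pderivU G p) (pderivV X p + t • pderivV G p) : ℝ) ^ 2))
      (∫ p in D, ((inner ℝ (pderivU X p) (pderivU G p) : ℝ) +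
        (inner ℝ (pderivV X p) (pderivV G p) : ℝ))) 0 := by
  have DsubU : D ⊆ U := fun p hp => hDU (subset_closure hp)
  -- continuity of the partial derivatives
  have hXU : ContinuousOn (pderivU X) U :=
    (hX.continuousOn_fderiv_of_isOpen hU (by exact_mod_cast le_top)).clm_apply continuousOn_const
  have hXV : ContinuousOn (pderivV X) U :=
    (hX.continuousOn_fderiv_of_isOpen hU (by exact_mod_cast le_top)).clm_apply continuousOn_const
  have hGU : Continuous (pderivU G) :=
    (hG.continuous_fderiv (by simp)).clm_apply continuous_const
  have hGV : Continuous (pderivV G) :=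
    (hG.continuous_fderiv (by simp)).clm_apply continuous_const
  -- vanishing of derivatives of G outside the support
  have hG0 : ∀ p, p ∉ tsupport G → pderivU G p = 0 ∧ pderivV G p = 0 := by
    intro p hp
    have h0 : fderiv ℝ G p = 0 := by
      have hev : G =ᶠ[nhds p] (fun _ => 0) := by
        filter_upwards [(isClosed_tsupport G).isOpen_compl.mem_nhds hp] with q hq
        exact image_eq_zero_of_notMem_tsupport hq
      rw [hev.fderiv_eq]
      exact fderiv_const_apply 0
    constructor <;> simp [pderivU, pderivV, h0]
  -- degenerate case : empty support
  rcases (tsupport G).eq_empty_or_nonempty with hKe | hKne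
  · have h1 : ∀ p : ℝ × ℝ, pderivU G p = 0 := fun p => (hG0 p (by simp [hKe])).1
    have h2 : ∀ p : ℝ × ℝ, pderivV G p = 0 := fun p => (hG0 p (by simp [hKe])).2
    simp only [h1, h2, smul_zero, add_zero, inner_zero_right, integral_zero]
    exact hasDerivAt_const (0:ℝ) _
  -- main case
  set A : ℝ × (ℝ × ℝ) → EuclideanSpace ℝ (Fin n) :=
    fun q => pderivU X q.2 + q.1 • pderivU G q.2 with hAdef
  set B : ℝ × (ℝ × ℝ) → EuclideanSpace ℝ (Fin n) :=
    fun q => pderivV X q.2 + q.1 • pderivV G q.2 with hBdef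
  have hsnd : ContinuousOn (Prod.snd : ℝ × (ℝ × ℝ) → ℝ × ℝ) (univ ×ˢ U) :=
    continuous_snd.continuousOn
  have hmap : MapsTo (Prod.snd : ℝ × (ℝ × ℝ) → ℝ × ℝ) (univ ×ˢ U) U := fun q hq => hq.2
  have hAc : ContinuousOn A (univ ×ˢ U) :=
    (hXU.comp hsnd hmap).add
      ((continuous_fst.continuousOn).smul ((hGU.comp continuous_snd).continuousOn))
  have hBc : ContinuousOn B (univ ×ˢ U) :=
    (hXV.comp hsnd hmap).add
      ((continuous_fst.continuousOn).smul ((hGV.comp continuous_snd).continuousOn))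
  set H : ℝ × (ℝ × ℝ) → ℝ := fun q => ‖A q‖ ^ 2 * ‖B q‖ ^ 2 - ⟪A q, B q⟫ ^ 2 with hHdef
  have hHc : ContinuousOn H (univ ×ˢ U) :=
    ((hAc.norm.pow 2).mul (hBc.norm.pow 2)).sub ((hAc.inner hBc).pow 2)
  set W := (univ ×ˢ U) ∩ H ⁻¹' Set.Ioi 0 with hWdef
  have hWo : IsOpen W := hHc.isOpen_inter_preimage (isOpen_univ.prod hU) isOpen_Ioi
  have hKU : ∀ p ∈ tsupport G, p ∈ U := fun p hp => DsubU (hGs hp)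
  have hH0pos : ∀ p ∈ U, 0 < H (0, p) := by
    intro p hp
    obtain ⟨h1, h2⟩ := hconf p hp
    have hx : (0:ℝ) < ‖pderivU X p‖ := norm_pos_iff.mpr (himm p hp)
    have hEq : H (0, p) = ‖pderivU X p‖ ^ 2 * ‖pderivU X p‖ ^ 2 := by
      simp only [hHdef, hAdef, hBdef, zero_smul, add_zero]
      rw [h2, ← h1]; ring
    rw [hEq]; positivity
  have hsubW : ({(0 : ℝ)} ×ˢ tsupport G) ⊆ W := by
    rintro ⟨t, p⟩ ⟨ht, hp⟩
    simp only [mem_singleton_iff] at ht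
    subst ht
    exact ⟨⟨mem_univ _, hKU p hp⟩, hH0pos p (hKU p hp)⟩
  obtain ⟨V1, V2, hV1o, hV2o, h0V1, hKV2, hVW⟩ :=
    generalized_tube_lemma isCompact_singleton hGc hWo hsubW
  obtain ⟨ε, hε, hball⟩ := Metric.isOpen_iff.mp hV1o 0 (singleton_subset_iff.mp h0V1)
  set S := Metric.closedBall (0 : ℝ) (ε / 2) ×ˢ tsupport G with hSdef
  have hSW : S ⊆ W := by
    rintro ⟨t, p⟩ ⟨ht, hp⟩
    refine hVW ⟨hball ?_, hKV2 hp⟩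
    have h1 : dist t 0 ≤ ε / 2 := Metric.mem_closedBall.mp ht
    exact Metric.mem_ball.mpr (lt_of_le_of_lt h1 (half_lt_self hε))
  have hScpt : IsCompact S := (isCompact_closedBall _ _).prod hGc
  have hSne : S.Nonempty :=
    ⟨(0, hKne.choose), ⟨Metric.mem_closedBall_self (by positivity), hKne.choose_spec⟩⟩
  obtain ⟨q₀, hq₀S, hq₀min⟩ :=
    hScpt.exists_isMinOn hSne (hHc.mono fun q hq => (hSW hq).1)
  set δ := H q₀ with hδdef
  have hδpos : 0 < δ := (hSW hq₀S).2
  have hδle : ∀ q ∈ S, δ ≤ H q := fun q hq => isMinOn_iff.mp hq₀min q hq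
  -- numerator
  set N : ℝ × (ℝ × ℝ) → ℝ := fun q =>
    ⟪pderivU G q.2, A q⟫ * ‖B q‖ ^ 2 + ‖A q‖ ^ 2 * ⟪pderivV G q.2, B q⟫ -
      ⟪A q, B q⟫ * (⟪pderivU G q.2, B q⟫ + ⟪A q, pderivV G q.2⟫) with hNdef
  have hgu : ContinuousOn (fun q : ℝ × (ℝ × ℝ) => pderivU G q.2) (univ ×ˢ U) :=
    (hGU.comp continuous_snd).continuousOn
  have hgv : ContinuousOn (fun q : ℝ × (ℝ × ℝ) => pderivV G q.2) (univ ×ˢ U) :=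
    (hGV.comp continuous_snd).continuousOn
  have hNc : ContinuousOn N (univ ×ˢ U) :=
    (((hgu.inner hAc).mul (hBc.norm.pow 2)).add ((hAc.norm.pow 2).mul (hgv.inner hBc))).sub
      ((hAc.inner hBc).mul ((hgu.inner hBc).add (hAc.inner hgv)))
  obtain ⟨M, hM⟩ := hScpt.exists_bound_of_continuousOn (hNc.mono fun q hq => (hSW hq).1)
  have hM0 : 0 ≤ M := le_trans (norm_nonneg _) (hM _ hSne.choose_spec)
  set F' : ℝ → (ℝ × ℝ) → ℝ := fun t p => N (t, p) / Real.sqrt (H (t, p)) with hF'def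
  -- measure-theoretic preliminaries
  have hclos : IsCompact (closure D) :=
    Metric.isCompact_of_isClosed_isBounded isClosed_closure hDb.closure
  have hDfin : volume D < ⊤ := lt_of_le_of_lt (measure_mono subset_closure) hclos.measure_lt_top
  have hFc : ∀ t : ℝ, ContinuousOn (fun p =>
      Real.sqrt (‖pderivU X p + t • pderivU G p‖ ^ 2 * ‖pderivV X p + t • pderivV G p‖ ^ 2 -
        (inner ℝ (pderivU X p + t • pderivU G p) (pderivV X p + t • pderivV G p) : ℝ) ^ 2)) U := by
    intro t
    have h1 : ContinuousOn (fun p => pderivU X p + t • pderivU G p) U :=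
      hXU.add (hGU.continuousOn.const_smul t)
    have h2 : ContinuousOn (fun p => pderivV X p + t • pderivV G p) U :=
      hXV.add (hGV.continuousOn.const_smul t)
    exact Real.continuous_sqrt.comp_continuousOn
      (((h1.norm.pow 2).mul (h2.norm.pow 2)).sub ((h1.inner h2).pow 2))
  have hF_meas : ∀ᶠ t in nhds (0:ℝ), AEStronglyMeasurable (fun p =>
      Real.sqrt (‖pderivU X p + t • pderivU G p‖ ^ 2 * ‖pderivV X p + t • pderivV G p‖ ^ 2 -
        (inner ℝ (pderivU X p + t • pderivU G p) (pderivV X p + t • pderivV G p) : ℝ) ^ 2))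
      (volume.restrict D) :=
    Filter.Eventually.of_forall fun t =>
      ((hFc t).mono DsubU).aestronglyMeasurable hD.measurableSet
  obtain ⟨C, hC⟩ := hclos.exists_bound_of_continuousOn ((hFc 0).mono hDU)
  have hF_int : Integrable (fun p =>
      Real.sqrt (‖pderivU X p + (0:ℝ) • pderivU G p‖ ^ 2 *
          ‖pderivV X p + (0:ℝ) • pderivV G p‖ ^ 2 -
        (inner ℝ (pderivU X p + (0:ℝ) • pderivU G p)
          (pderivV X p + (0:ℝ) • pderivV G p) : ℝ) ^ 2)) (volume.restrict D) := by
    refine ((integrableOn_const_iff (C := C)).mpr (Or.inr hDfin)).mono'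
      (((hFc 0).mono DsubU).aestronglyMeasurable hD.measurableSet) ?_
    filter_upwards [ae_restrict_mem hD.measurableSet] with p hp
    exact hC p (subset_closure hp)
  have hjc : Continuous (fun p : ℝ × ℝ => ((0:ℝ), p)) := continuous_const.prodMk continuous_id
  have hjm : MapsTo (fun p : ℝ × ℝ => ((0:ℝ), p)) U (univ ×ˢ U) := fun p hp => ⟨mem_univ _, hp⟩
  have hN0 : ContinuousOn (fun p => N (0, p)) U := hNc.comp hjc.continuousOn hjm
  have hH0c : ContinuousOn (fun p => H (0, p)) U := hHc.comp hjc.continuousOn hjm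
  have hF'_meas : AEStronglyMeasurable (F' 0) (volume.restrict D) := by
    rw [aestronglyMeasurable_iff_aemeasurable]
    exact ((hN0.mono DsubU).aemeasurable hD.measurableSet).div
      ((Real.continuous_sqrt.comp_continuousOn (hH0c.mono DsubU)).aemeasurable hD.measurableSet)
  -- uniform bound
  have h_bound : ∀ᵐ p ∂(volume.restrict D), ∀ t ∈ Metric.ball (0:ℝ) (ε/2),
      ‖F' t p‖ ≤ M / Real.sqrt δ := by
    filter_upwards [ae_restrict_mem hD.measurableSet] with p hp t ht
    by_cases hpK : p ∈ tsupport G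
    · have htS : (t, p) ∈ S := ⟨Metric.mem_closedBall.mpr (Metric.mem_ball.mp ht).le, hpK⟩
      have h1 : |N (t, p)| ≤ M := by simpa using hM _ htS
      have h2 : Real.sqrt δ ≤ Real.sqrt (H (t, p)) := Real.sqrt_le_sqrt (hδle _ htS)
      have h3 : 0 < Real.sqrt δ := Real.sqrt_pos.mpr hδpos
      have hEq : ‖F' t p‖ = |N (t, p)| / Real.sqrt (H (t, p)) := by
        rw [hF'def, Real.norm_eq_abs, abs_div, abs_of_nonneg (Real.sqrt_nonneg _)]
      rw [hEq]
      exact div_le_div₀ hM0 h1 h3 h2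
    · have hEq : F' t p = 0 := by
        rw [hF'def]
        simp [hNdef, hAdef, hBdef, (hG0 p hpK).1, (hG0 p hpK).2]
      rw [hEq]
      simpa using div_nonneg hM0 (Real.sqrt_nonneg _)
  -- differentiability
  have h_diff : ∀ᵐ p ∂(volume.restrict D), ∀ t ∈ Metric.ball (0:ℝ) (ε/2),
      HasDerivAt (fun s : ℝ =>
        Real.sqrt (‖pderivU X p + s • pderivU G p‖ ^ 2 * ‖pderivV X p + s • pderivV G p‖ ^ 2 -
          (inner ℝ (pderivU X p + s • pderivU G p) (pderivV X p + s • pderivV G p) : ℝ) ^ 2))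
        (F' t p) t := by
    filter_upwards [ae_restrict_mem hD.measurableSet] with p hp t ht
    by_cases hpK : p ∈ tsupport G
    · have htS : (t, p) ∈ S := ⟨Metric.mem_closedBall.mpr (Metric.mem_ball.mp ht).le, hpK⟩
      have hpos : 0 < H (t, p) := lt_of_lt_of_le hδpos (hδle _ htS)
      have hpos' : 0 < ‖pderivU X p + t • pderivU G p‖ ^ 2 *
          ‖pderivV X p + t • pderivV G p‖ ^ 2 -
          ⟪pderivU X p + t • pderivU G p, pderivV X p + t • pderivV G p⟫ ^ 2 := by
        simpa [hHdef, hAdef, hBdef] using hpos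
      exact aux_hasDerivAt (pderivU X p) (pderivV X p) (pderivU G p) (pderivV G p) t hpos'
    · have hEq : F' t p = 0 := by
        rw [hF'def]
        simp [hNdef, hAdef, hBdef, (hG0 p hpK).1, (hG0 p hpK).2]
      rw [hEq]
      simp only [(hG0 p hpK).1, (hG0 p hpK).2, smul_zero, add_zero]
      exact hasDerivAt_const t _
  -- apply differentiation under the integral sign
  have main := hasDerivAt_integral_of_dominated_loc_of_deriv_le (μ := volume.restrict D)
    (F := fun t p =>
      Real.sqrt (‖pderivU X p + t • pderivU G p‖ ^ 2 * ‖pderivV X p + t • pderivV G p‖ ^ 2 -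
        (inner ℝ (pderivU X p + t • pderivU G p) (pderivV X p + t • pderivV G p) : ℝ) ^ 2))
    (F' := F') (x₀ := 0) (bound := fun _ => M / Real.sqrt δ)
    (Metric.ball_mem_nhds 0 (half_pos hε)) hF_meas hF_int hF'_meas h_bound
    ((integrableOn_const_iff (C := M / Real.sqrt δ)).mpr (Or.inr hDfin)) h_diff
  have heq : (∫ p in D, F' 0 p) = ∫ p in D,
      ((inner ℝ (pderivU X p) (pderivU G p) : ℝ) + (inner ℝ (pderivV X p) (pderivV G p) : ℝ)) := by
    refine setIntegral_congr_fun hD.measurableSet fun p hp => ?_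
    have hpU : p ∈ U := DsubU hp
    obtain ⟨h1, h2⟩ := hconf p hpU
    have hx : (0:ℝ) < ‖pderivU X p‖ := norm_pos_iff.mpr (himm p hpU)
    rw [hF'def]
    simp only [hNdef, hHdef, hAdef, hBdef, zero_smul, add_zero]
    rw [h2, ← h1]
    have hsq : Real.sqrt (‖pderivU X p‖ ^ 2 * ‖pderivU X p‖ ^ 2 - (0:ℝ) ^ 2)
        = ‖pderivU X p‖ ^ 2 := by
      have h4 : ‖pderivU X p‖ ^ 2 * ‖pderivU X p‖ ^ 2 - (0:ℝ) ^ 2 = (‖pderivU X p‖ ^ 2) ^ 2 := by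
        ring
      rw [h4, Real.sqrt_sq (by positivity)]
    rw [hsq, div_eq_iff (by positivity : (‖pderivU X p‖ ^ 2 : ℝ) ≠ 0)]
    rw [real_inner_comm (pderivU G p) (pderivU X p), real_inner_comm (pderivV G p) (pderivV X p)]
    ring
  rw [← heq]
  exact main.2
end
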